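/- arXiv:1204.6645 — 2 statements merged into one kernel-verified Lean document; each statement's English description precedes it below -/
import Mathlib

section
/- Let G be a weighted graph with finite nonempty vertex subsets X₀, X₁, …, X_m (m ≥ 1) and 0 < ε < 1. Suppose for each i = 1, …, m the pair (X_{i−1}, X_i)_G satisfies DISC_≥(q_i, p_i, ε) with 0 ≤ q_i ≤ p_i ≤ 1. Then the weighted bipartite graph G' on X₀ × X_m defined by G'(x₀, x_m) = E_{x₁,…,x_{m−1}}[G(x₀,x₁)G(x₁,x₂)⋯G(x_{m−1},x_m)] satisfies DISC_≥(q₁q₂⋯q_m, p₁p₂⋯p_m, 36 ε^{1/(2m)}). -/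
/-- The one-sided discrepancy condition `DISC_≥(q, p, ε)` for a weighted bipartite graph,
between the vertex subsets `A` and `B`. -/
def DISCge {V : Type*} (A B : Finset V) (K : V → V → ℝ) (q p ε : ℝ) : Prop :=
  ∀ u v : V → ℝ, (∀ x, 0 ≤ u x ∧ u x ≤ 1) → (∀ y, 0 ≤ v y ∧ v y ≤ 1) →
    -(ε * p) ≤ (∑ x ∈ A, ∑ y ∈ B, (K x y - q) * u x * v y) /
        ((A.card : ℝ) * (B.card : ℝ))

/-!
`G'` is an iterated composition: each step averages the previous kernel against `G` over the
next middle set. One composition step turns `DISC_≥(q₁, p₁, ε₁)` and `DISC_≥(q₂, p₂, ε₂)` into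
`DISC_≥(q₁q₂, p₁p₂, ε₁ + 2√ε₂)`. After averaging the test functions over the outer sets, one has
to bound `∑ b, f b * g b` from below on the middle set. Testing the second condition against the
set where `g < β - √ε₂ p₂` shows that this set has relative size at most `√ε₂`; on its complement
`g` is large and the first condition bounds the sum of `f`. Iterating gives the error
`ε + 2(m-1)√ε ≤ 2 ε^(1/(2m))` as long as `ε^(1/(2m)) ≤ 1/2`, and when `36 ε^(1/(2m)) ≥ 1` the
conclusion holds trivially.
-/

section

open Finset

variable {V : Type*} {A B C : Finset V} {K : V → V → ℝ} {q p ε : ℝ}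

theorem DISCge_iff_sum (hA : A.Nonempty) (hB : B.Nonempty) :
    DISCge A B K q p ε ↔ ∀ u v : V → ℝ, (∀ x, 0 ≤ u x ∧ u x ≤ 1) → (∀ y, 0 ≤ v y ∧ v y ≤ 1) →
      -(ε * p * (#A * #B)) ≤ ∑ x ∈ A, ∑ y ∈ B, (K x y - q) * u x * v y := by
  have hAB : (0 : ℝ) < #A * #B := by positivity
  simp only [DISCge, le_div_iff₀ hAB, neg_mul]

theorem DISCge.mono {ε' : ℝ} (h : DISCge A B K q p ε) (hp : 0 ≤ p) (hε : ε ≤ ε') :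
    DISCge A B K q p ε' := fun u v hu hv =>
  (neg_le_neg (mul_le_mul_of_nonneg_right hε hp)).trans (h u v hu hv)

theorem DISCge_of_one_le (hA : A.Nonempty) (hB : B.Nonempty) (hK : ∀ x y, 0 ≤ K x y)
    (hq : 0 ≤ q) (hqp : q ≤ p) (hε : 1 ≤ ε) : DISCge A B K q p ε := by
  rw [DISCge_iff_sum hA hB]
  intro u v hu hv
  have hterm : ∀ x y, -q ≤ (K x y - q) * u x * v y := fun x y => by
    obtain ⟨hu0, hu1⟩ := hu x
    obtain ⟨hv0, hv1⟩ := hv y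
    nlinarith [hK x y, mul_nonneg hu0 hv0, mul_le_one₀ hu1 hv0 hv1,
      mul_nonneg (mul_nonneg (hK x y) hu0) hv0]
  calc -(ε * p * (#A * #B)) ≤ ∑ x ∈ A, ∑ y ∈ B, -q := by
        simp only [sum_const, nsmul_eq_mul]
        nlinarith [mul_le_mul hε hqp hq (zero_le_one.trans hε), (by positivity : (0:ℝ) ≤ #A * #B)]
    _ ≤ _ := sum_le_sum fun x _ => sum_le_sum fun y _ => hterm x y

theorem DISCge.le_sum_subset_right (h : DISCge A B K q p ε) (hA : A.Nonempty) (hB : B.Nonempty)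
    {u : V → ℝ} (hu : ∀ x, 0 ≤ u x ∧ u x ≤ 1) {T : Finset V} (hT : T ⊆ B) :
    -(ε * p * (#A * #B)) ≤ ∑ x ∈ A, ∑ y ∈ T, (K x y - q) * u x := by
  classical
  have := (DISCge_iff_sum hA hB).1 h u (fun y => if y ∈ T then 1 else 0) hu
    fun y => by split_ifs <;> norm_num
  simpa [mul_ite, sum_ite_mem, inter_eq_right.2 hT] using this

theorem DISCge.le_sum_subset_left (h : DISCge A B K q p ε) (hA : A.Nonempty) (hB : B.Nonempty)
    {v : V → ℝ} (hv : ∀ y, 0 ≤ v y ∧ v y ≤ 1) {S : Finset V} (hS : S ⊆ A) :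
    -(ε * p * (#A * #B)) ≤ ∑ x ∈ S, ∑ y ∈ B, (K x y - q) * v y := by
  classical
  have := (DISCge_iff_sum hA hB).1 h (fun x => if x ∈ S then 1 else 0) v
    (fun x => by split_ifs <;> norm_num) hv
  simpa [mul_ite, ite_mul, ← sum_filter, sum_ite_mem, inter_eq_right.2 hS] using this

theorem mul_card_le_sum_mul {ι : Type*} {B : Finset ι} {f g : ι → ℝ} {α β p₁ p₂ ε₁ ε₂ : ℝ}
    (hf : ∀ b ∈ B, 0 ≤ f b) (hg : ∀ b ∈ B, 0 ≤ g b) (hα : 0 ≤ α) (hαp : α ≤ p₁)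
    (hβ : 0 ≤ β) (hβp : β ≤ p₂) (hε₁ : 0 ≤ ε₁) (hε₂ : 0 < ε₂)
    (hfT : ∀ T ⊆ B, -(ε₁ * p₁ * #B) ≤ ∑ b ∈ T, (f b - α))
    (hgT : ∀ T ⊆ B, -(ε₂ * p₂ * #B) ≤ ∑ b ∈ T, (g b - β)) :
    (α * β - (ε₁ + 2 * √ε₂) * (p₁ * p₂)) * #B ≤ ∑ b ∈ B, f b * g b := by
  set s := √ε₂
  set t := s * p₂
  have hs : 0 < s := Real.sqrt_pos.2 hε₂
  have hss : s * s = ε₂ := Real.mul_self_sqrt hε₂.le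
  have hp₁ : 0 ≤ p₁ := hα.trans hαp
  have hp₂ : 0 ≤ p₂ := hβ.trans hβp
  have hfg : 0 ≤ ∑ b ∈ B, f b * g b := sum_nonneg fun b hb => mul_nonneg (hf b hb) (hg b hb)
  rcases le_or_gt β t with hβt | htβ
  · have : α * β ≤ s * (p₁ * p₂) := by
      calc α * β ≤ p₁ * t := mul_le_mul hαp hβt hβ hp₁
        _ = s * (p₁ * p₂) := by ring
    have : α * β - (ε₁ + 2 * s) * (p₁ * p₂) ≤ 0 := by
      nlinarith [mul_nonneg (add_nonneg hε₁ hs.le) (mul_nonneg hp₁ hp₂)]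
    exact (mul_nonpos_of_nonpos_of_nonneg this (Nat.cast_nonneg _)).trans hfg
  set T := B.filter (fun b => β - t ≤ g b)
  set Tc := B.filter (fun b => ¬ β - t ≤ g b)
  have ht : 0 < t := mul_pos hs (by nlinarith)
  have hTc : (#Tc : ℝ) ≤ s * #B := by
    have hlow := hgT Tc (filter_subset _ _)
    have hup : ∑ b ∈ Tc, (g b - β) ≤ ∑ b ∈ Tc, -t :=
      sum_le_sum fun b hb => by linarith [(mem_filter.1 hb).2]
    rw [sum_const, nsmul_eq_mul] at hup
    have hts : t * (s * #B) = ε₂ * p₂ * #B := by rw [← hss]; ring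
    refine le_of_mul_le_mul_left ?_ ht
    linarith
  have hT : (1 - s) * #B ≤ #T := by
    have : (#T : ℝ) + #Tc = #B := by exact_mod_cast card_filter_add_card_filter_not _
    linarith
  have hfT' : (α * (1 - s) - ε₁ * p₁) * #B ≤ ∑ b ∈ T, f b := by
    have := hfT T (filter_subset _ _)
    rw [sum_sub_distrib, sum_const, nsmul_eq_mul] at this
    nlinarith
  calc (α * β - (ε₁ + 2 * s) * (p₁ * p₂)) * #B
      ≤ ((β - t) * (α * (1 - s) - ε₁ * p₁)) * #B := by
        refine mul_le_mul_of_nonneg_right ?_ (Nat.cast_nonneg _)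
        nlinarith [mul_le_mul hαp hβp hβ hp₁, mul_nonneg hα hs.le, mul_nonneg hε₁ hp₁,
          mul_nonneg (mul_nonneg hα hs.le) ht.le, mul_nonneg (mul_nonneg hε₁ hp₁) ht.le,
          mul_le_mul_of_nonneg_left hαp ht.le]
    _ = (β - t) * ((α * (1 - s) - ε₁ * p₁) * #B) := mul_assoc _ _ _
    _ ≤ (β - t) * ∑ b ∈ T, f b := mul_le_mul_of_nonneg_left hfT' (by linarith)
    _ = ∑ b ∈ T, (β - t) * f b := mul_sum _ _ _
    _ ≤ ∑ b ∈ T, f b * g b := sum_le_sum fun b hb => by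
        obtain ⟨hbB, hgb⟩ := mem_filter.1 hb
        nlinarith [hf b hbB]
    _ ≤ ∑ b ∈ B, f b * g b :=
        sum_le_sum_of_subset_of_nonneg (filter_subset _ _) fun b hb _ =>
          mul_nonneg (hf b hb) (hg b hb)

theorem DISCge.comp {K₁ K₂ : V → V → ℝ} {q₁ p₁ ε₁ q₂ p₂ ε₂ : ℝ}
    (hA : A.Nonempty) (hB : B.Nonempty) (hC : C.Nonempty)
    (hK₁ : ∀ x y, 0 ≤ K₁ x y) (hK₂ : ∀ x y, 0 ≤ K₂ x y) (hq₁ : 0 ≤ q₁) (hq₁p : q₁ ≤ p₁)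
    (hq₂ : 0 ≤ q₂) (hq₂p : q₂ ≤ p₂) (hε₁ : 0 ≤ ε₁) (hε₂ : 0 < ε₂)
    (h₁ : DISCge A B K₁ q₁ p₁ ε₁) (h₂ : DISCge B C K₂ q₂ p₂ ε₂) :
    DISCge A C (fun x y => (∑ b ∈ B, K₁ x b * K₂ b y) / #B) (q₁ * q₂) (p₁ * p₂)
      (ε₁ + 2 * √ε₂) := by
  rw [DISCge_iff_sum hA hC]
  intro u v hu hv
  set f : V → ℝ := fun b => ∑ x ∈ A, K₁ x b * u x
  set g : V → ℝ := fun b => ∑ y ∈ C, K₂ b y * v y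
  have hsum_le_card : ∀ (D : Finset V) (w : V → ℝ), (∀ x, 0 ≤ w x ∧ w x ≤ 1) →
      0 ≤ ∑ x ∈ D, w x ∧ ∑ x ∈ D, w x ≤ #D := fun D w hw =>
    ⟨sum_nonneg fun x _ => (hw x).1, by simpa using sum_le_sum fun x (_ : x ∈ D) => (hw x).2⟩
  obtain ⟨hu0, hu1⟩ := hsum_le_card A u hu
  obtain ⟨hv0, hv1⟩ := hsum_le_card C v hv
  have hf : ∀ T ⊆ B, -(ε₁ * (p₁ * #A) * #B) ≤ ∑ b ∈ T, (f b - q₁ * ∑ x ∈ A, u x) := by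
    intro T hT
    convert h₁.le_sum_subset_right hA hB hu hT using 1
    · ring
    · rw [sum_comm]
      simp only [f, mul_sum, ← sum_sub_distrib, sub_mul]
  have hg : ∀ T ⊆ B, -(ε₂ * (p₂ * #C) * #B) ≤ ∑ b ∈ T, (g b - q₂ * ∑ y ∈ C, v y) := by
    intro T hT
    convert h₂.le_sum_subset_left hB hC hv hT using 1
    · ring
    · simp only [g, mul_sum, ← sum_sub_distrib, sub_mul]
  have key := mul_card_le_sum_mul (fun b _ => sum_nonneg fun x _ => mul_nonneg (hK₁ x b) (hu x).1)
    (fun b _ => sum_nonneg fun y _ => mul_nonneg (hK₂ b y) (hv y).1) (mul_nonneg hq₁ hu0)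
    (mul_le_mul hq₁p hu1 hu0 (hq₁.trans hq₁p)) (mul_nonneg hq₂ hv0)
    (mul_le_mul hq₂p hv1 hv0 (hq₂.trans hq₂p)) hε₁ hε₂ hf hg
  have hB' : (0 : ℝ) < #B := by exact_mod_cast hB.card_pos
  have hfg : ∑ b ∈ B, f b * g b = ∑ x ∈ A, ∑ y ∈ C, (∑ b ∈ B, K₁ x b * K₂ b y) * u x * v y := by
    calc ∑ b ∈ B, f b * g b = ∑ b ∈ B, ∑ x ∈ A, ∑ y ∈ C, K₁ x b * K₂ b y * u x * v y :=
          sum_congr rfl fun b _ => by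
            rw [sum_mul_sum]
            exact sum_congr rfl fun x _ => sum_congr rfl fun y _ => by ring
      _ = ∑ x ∈ A, ∑ y ∈ C, ∑ b ∈ B, K₁ x b * K₂ b y * u x * v y := by
          rw [sum_comm]
          exact sum_congr rfl fun x _ => sum_comm
      _ = _ := by simp only [sum_mul]
  have hexpand : ∑ x ∈ A, ∑ y ∈ C, ((∑ b ∈ B, K₁ x b * K₂ b y) / #B - q₁ * q₂) * u x * v y
      = (∑ b ∈ B, f b * g b) / #B - q₁ * q₂ * ((∑ x ∈ A, u x) * ∑ y ∈ C, v y) := by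
    rw [hfg, sum_mul_sum, sum_div, mul_sum, ← sum_sub_distrib]
    refine sum_congr rfl fun x _ => ?_
    rw [sum_div, mul_sum, ← sum_sub_distrib]
    exact sum_congr rfl fun y _ => by ring
  rw [hexpand, le_sub_iff_add_le, le_div_iff₀ hB']
  linarith

theorem sum_piFinset_eq_sum_last_init {β M : Type*} [DecidableEq β] [AddCommMonoid M] {n : ℕ}
    (S : Fin (n + 1) → Finset β) (F : (Fin (n + 1) → β) → M) :
    ∑ z ∈ Fintype.piFinset S, F z
      = ∑ b ∈ S (Fin.last n), ∑ z ∈ Fintype.piFinset (Fin.init S), F (Fin.snoc z b) := by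
  rw [← sum_product', ← filter_true_of_mem (fun z _ => trivial) (s := Fintype.piFinset S),
    filter_piFinset_eq_map_snocEquiv S (fun _ => True), sum_map]
  simp [Fin.snocEquiv]

def pinEnds {m : ℕ} (X : Fin (m + 1) → Finset V) (x y : V) : Fin (m + 1) → Finset V :=
  fun j => if j = 0 then {x} else if j = Fin.last m then {y} else X j

def walkWeight (G : V → V → ℝ) {m : ℕ} (z : Fin (m + 1) → V) : ℝ :=
  ∏ i : Fin m, G (z i.castSucc) (z i.succ)

-- The end sets are pinned to singletons, so the denominator is the product of the `#(X j)`,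
-- `0 < j < m`, and this is the kernel `G'` of the statement.
noncomputable def walkKernel [DecidableEq V] (G : V → V → ℝ) {m : ℕ}
    (X : Fin (m + 1) → Finset V) (x y : V) : ℝ :=
  (∑ z ∈ Fintype.piFinset (pinEnds X x y), walkWeight G z) / ∏ j, (#(pinEnds X x y j) : ℝ)

theorem walkWeight_snoc (G : V → V → ℝ) {m : ℕ} (z : Fin (m + 1) → V) (b : V) :
    walkWeight G (Fin.snoc z b : Fin (m + 2) → V) = walkWeight G z * G (z (Fin.last m)) b := by
  simp only [walkWeight, Fin.prod_univ_castSucc, Fin.succ_castSucc, Fin.snoc_castSucc,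
    Fin.succ_last, Fin.snoc_last]

theorem walkKernel_nonneg [DecidableEq V] {G : V → V → ℝ} (hG : ∀ x y, 0 ≤ G x y) {m : ℕ}
    (X : Fin (m + 1) → Finset V) (x y : V) : 0 ≤ walkKernel G X x y :=
  div_nonneg (sum_nonneg fun _ _ => prod_nonneg fun _ _ => hG _ _)
    (prod_nonneg fun _ _ => Nat.cast_nonneg _)

theorem walkKernel_one [DecidableEq V] (G : V → V → ℝ) (X : Fin 2 → Finset V) :
    walkKernel G X = G := by
  funext x y
  have hX : pinEnds X x y = fun j => {![x, y] j} := by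
    funext j
    fin_cases j <;> simp [pinEnds]
  simp [walkKernel, hX, Fintype.piFinset_singleton, walkWeight]

theorem walkKernel_succ [DecidableEq V] (G : V → V → ℝ) {n : ℕ} (X : Fin (n + 3) → Finset V)
    (x y : V) :
    walkKernel G X x y = (∑ b ∈ X (Fin.last (n + 1)).castSucc,
        walkKernel G (Fin.init X) x b * G b y) / #(X (Fin.last (n + 1)).castSucc) := by
  set M := X (Fin.last (n + 1)).castSucc
  have hinit : ∀ b, Fin.init (pinEnds (Fin.init X) x b) = Fin.init (Fin.init (pinEnds X x y)) :=
    fun b => funext fun j => by simp [pinEnds, Fin.init, Fin.castSucc_ne_last]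
  have hlast : pinEnds X x y (Fin.last (n + 2)) = {y} := by simp [pinEnds]
  have hmid : Fin.init (pinEnds X x y) (Fin.last (n + 1)) = M := by
    simp [pinEnds, Fin.init, Fin.castSucc_ne_last, M]
  have hlast' : ∀ b, pinEnds (Fin.init X) x b (Fin.last (n + 1)) = {b} := by simp [pinEnds]
  have hnum : ∀ b, ∑ z ∈ Fintype.piFinset (pinEnds (Fin.init X) x b), walkWeight G z
      = ∑ z ∈ Fintype.piFinset (Fin.init (Fin.init (pinEnds X x y))),
          walkWeight G (Fin.snoc z b : Fin (n + 2) → V) := fun b => by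
    rw [sum_piFinset_eq_sum_last_init, hlast', sum_singleton, hinit]
  have hden : ∀ b, ∏ j, (#(pinEnds X x y j) : ℝ)
      = (∏ j, (#(pinEnds (Fin.init X) x b j) : ℝ)) * #M := fun b => by
    have hQ : ∀ j : Fin (n + 1), pinEnds (Fin.init X) x b j.castSucc
        = pinEnds X x y j.castSucc.castSucc := fun j => congrFun (hinit b) j
    rw [Fin.prod_univ_castSucc, hlast, Fin.prod_univ_castSucc, Fin.prod_univ_castSucc (n := n + 1),
      hlast', ← hmid]
    simp only [hQ, card_singleton, Nat.cast_one, mul_one]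
    rfl
  have hsplit : ∑ z ∈ Fintype.piFinset (pinEnds X x y), walkWeight G z
      = ∑ b ∈ M, (∑ z ∈ Fintype.piFinset (pinEnds (Fin.init X) x b), walkWeight G z) * G b y := by
    rw [sum_piFinset_eq_sum_last_init, hlast, sum_singleton, sum_piFinset_eq_sum_last_init, hmid]
    refine sum_congr rfl fun b _ => ?_
    rw [hnum, sum_mul]
    exact sum_congr rfl fun z _ => by rw [walkWeight_snoc, Fin.snoc_last]
  simp only [walkKernel]
  rw [hsplit, sum_div, sum_div]
  refine sum_congr rfl fun b _ => ?_
  rw [hden b, div_mul_eq_mul_div, div_div]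

theorem DISCge_walkKernel [DecidableEq V] {G : V → V → ℝ} (hG : ∀ x y, 0 ≤ G x y) {ε : ℝ}
    (hε : 0 < ε) {n : ℕ} {X : Fin (n + 2) → Finset V} (hX : ∀ i, (X i).Nonempty)
    {q p : Fin (n + 1) → ℝ} (hqp : ∀ i, 0 ≤ q i ∧ q i ≤ p i)
    (h : ∀ i, DISCge (X i.castSucc) (X i.succ) G (q i) (p i) ε) :
    DISCge (X 0) (X (Fin.last (n + 1))) (walkKernel G X) (∏ i, q i) (∏ i, p i)
      (ε + 2 * n * √ε) := by
  induction n with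
  | zero => simpa [walkKernel_one] using h 0
  | succ n ih =>
    have hinit := ih (X := Fin.init X) (fun i => hX _) (q := fun i => q i.castSucc)
      (p := fun i => p i.castSucc) (fun i => hqp _) (fun i => h _)
    have hstep := hinit.comp (hX _) (hX _) (hX _) (walkKernel_nonneg hG _) hG
      (prod_nonneg fun i _ => (hqp _).1)
      (prod_le_prod (fun i _ => (hqp _).1) fun i _ => (hqp _).2) (hqp _).1 (hqp _).2
      (by positivity) hε (h (Fin.last (n + 1)))
    rw [Fin.castSucc_zero, Fin.succ_last, ← funext₂ (walkKernel_succ G X)] at hstep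
    rw [Fin.prod_univ_castSucc q, Fin.prod_univ_castSucc p]
    convert hstep using 1
    push_cast
    ring

theorem add_two_mul_sqrt_le {ε : ℝ} (hε : 0 < ε) (n : ℕ)
    (hδ : ε ^ (1 / (2 * ((n + 1 : ℕ) : ℝ))) ≤ 1 / 2) :
    ε + 2 * n * √ε ≤ 2 * ε ^ (1 / (2 * ((n + 1 : ℕ) : ℝ))) := by
  set δ := ε ^ (1 / (2 * ((n + 1 : ℕ) : ℝ)))
  have hδ0 : 0 ≤ δ := Real.rpow_nonneg hε.le _
  have hsqrt : √ε = δ ^ (n + 1) := by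
    rw [Real.sqrt_eq_rpow, ← Real.rpow_natCast, ← Real.rpow_mul hε.le]
    congr 1
    field_simp
  have hpow : (n + 1 : ℝ) * δ ^ n ≤ 1 :=
    calc (n + 1 : ℝ) * δ ^ n ≤ 2 ^ n * δ ^ n := by
          gcongr
          exact_mod_cast Nat.lt_two_pow_self
      _ = (2 * δ) ^ n := (mul_pow _ _ _).symm
      _ ≤ 1 := pow_le_one₀ (by positivity) (by linarith)
  have hε_le : ε ≤ √ε := by
    have : √ε ≤ 1 := hsqrt ▸ pow_le_one₀ hδ0 (by linarith)
    nlinarith [Real.sq_sqrt hε.le, Real.sqrt_nonneg ε]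
  calc ε + 2 * n * √ε ≤ 2 * (n + 1) * √ε := by nlinarith [Real.sqrt_nonneg ε]
    _ = 2 * ((n + 1) * δ ^ n) * δ := by rw [hsqrt, pow_succ]; ring
    _ ≤ 2 * 1 * δ := by gcongr
    _ = 2 * δ := by ring

end

open Classical in
theorem stmt_13_general {V : Type*} {m : ℕ}
    (X : Fin (m + 1) → Finset V) (hX : ∀ i, (X i).Nonempty)
    (G : V → V → ℝ) (hG01 : ∀ x y, 0 ≤ G x y ∧ G x y ≤ 1)
    (q p : Fin m → ℝ) (hqp : ∀ i, 0 ≤ q i ∧ q i ≤ p i ∧ p i ≤ 1)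
    (ε : ℝ) (hε0 : 0 < ε)
    (hdisc : ∀ i : Fin m, DISCge (X i.castSucc) (X i.succ) G (q i) (p i) ε) :
    DISCge (X 0) (X (Fin.last m))
      (fun x₀ xm =>
        (∑ z ∈ Fintype.piFinset (fun j : Fin (m + 1) =>
              if j = 0 then {x₀} else if j = Fin.last m then {xm} else X j),
            ∏ i : Fin m, G (z i.castSucc) (z i.succ)) /
          ∏ j : Fin (m + 1),
            (((if j = 0 then ({x₀} : Finset V) else if j = Fin.last m then {xm}
                else X j).card : ℝ)))
      (∏ i : Fin m, q i) (∏ i : Fin m, p i)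
      (36 * ε ^ (1 / (2 * (m : ℝ)))) := by
  change DISCge (X 0) (X (Fin.last m)) (walkKernel G X) _ _ _
  have hG : ∀ x y, 0 ≤ G x y := fun x y => (hG01 x y).1
  have hq : ∀ i, 0 ≤ q i ∧ q i ≤ p i := fun i => ⟨(hqp i).1, (hqp i).2.1⟩
  have hδ : 0 ≤ ε ^ (1 / (2 * (m : ℝ))) := Real.rpow_nonneg hε0.le _
  by_cases h36 : 1 ≤ 36 * ε ^ (1 / (2 * (m : ℝ)))
  · exact DISCge_of_one_le (hX 0) (hX _) (walkKernel_nonneg hG X)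
      (Finset.prod_nonneg fun i _ => (hq i).1)
      (Finset.prod_le_prod (fun i _ => (hq i).1) fun i _ => (hq i).2) h36
  obtain ⟨n, rfl⟩ : ∃ n, m = n + 1 :=
    Nat.exists_eq_succ_of_ne_zero (by rintro rfl; norm_num at h36)
  refine (DISCge_walkKernel hG hε0 hX hq hdisc).mono
    (Finset.prod_nonneg fun i _ => (hq i).1.trans (hq i).2) ?_
  linarith [add_two_mul_sqrt_le hε0 n (by linarith)]

open Classical in
theorem stmt_13 {V : Type*} [Fintype V] {m : ℕ} (hm : 1 ≤ m)
    (X : Fin (m + 1) → Finset V) (hX : ∀ i, (X i).Nonempty)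
    (G : V → V → ℝ) (hGsymm : ∀ x y, G x y = G y x) (hG01 : ∀ x y, 0 ≤ G x y ∧ G x y ≤ 1)
    (q p : Fin m → ℝ) (hqp : ∀ i, 0 ≤ q i ∧ q i ≤ p i ∧ p i ≤ 1)
    (ε : ℝ) (hε0 : 0 < ε) (hε1 : ε < 1)
    (hdisc : ∀ i : Fin m, DISCge (X i.castSucc) (X i.succ) G (q i) (p i) ε) :
    DISCge (X 0) (X (Fin.last m))
      (fun x₀ xm =>
        (∑ z ∈ Fintype.piFinset (fun j : Fin (m + 1) =>
              if j = 0 then {x₀} else if j = Fin.last m then {xm} else X j),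
            ∏ i : Fin m, G (z i.castSucc) (z i.succ)) /
          ∏ j : Fin (m + 1),
            (((if j = 0 then ({x₀} : Finset V) else if j = Fin.last m then {xm}
                else X j).card : ℝ)))
      (∏ i : Fin m, q i) (∏ i : Fin m, p i)
      (36 * ε ^ (1 / (2 * (m : ℝ)))) :=
  stmt_13_general X hX G hG01 q p hqp ε hε0 hdisc
end

section
/- Let H be a tree on vertices {1,…,m}. For every θ > 0 there exists ε > 0 (of size at least polynomial in θ) such that the following holds. Let G be a weighted graph with finite nonempty vertex subsets X₁,…,X_m such that for each edge ab of H, the pair (X_a, X_b)_G satisfies DISC_≥(q_{ab}, p_{ab}, ε) for some 0 ≤ q_{ab} ≤ p_{ab} ≤ 1. Then G(H) ≥ q(H) − θ p(H), where G(H) = E over compatible maps of ∏_{ab∈E(H)} G(x_a,x_b), q(H) = ∏_{ab∈E(H)} q_{ab}, and p(H) = ∏_{ab∈E(H)} p_{ab}. -/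
open Classical in
/-- The density of compatible weighted homomorphisms of `H` into the weighted graph `G`,
with vertex `i` of `H` landing in `X i`. -/
noncomputable def den {V : Type*} [Fintype V] {m : ℕ} (G : V → V → ℝ)
    (H : SimpleGraph (Fin m)) (X : Fin m → Finset V) : ℝ :=
  (∑ z ∈ Fintype.piFinset X, ∏ i : Fin m, ∏ j : Fin m,
      if i < j ∧ H.Adj i j then G (z i) (z j) else 1) /
    ∏ i : Fin m, ((X i).card : ℝ)

open Classical in
/-- `q(H) = ∏_{ij ∈ E(H)} q i j`. -/
noncomputable def qprod {m : ℕ} (q : Fin m → Fin m → ℝ) (H : SimpleGraph (Fin m)) : ℝ :=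
  ∏ i : Fin m, ∏ j : Fin m, if i < j ∧ H.Adj i j then q i j else 1

/-!
Root the tree at `r`, let `par j` be the neighbour of `j ≠ r` closer to `r`, and peel off leaves,
deepest first. Throughout, vertex `i` carries a nonnegative weight `w i` which is at least `c i`
except on a fraction `fracBelow (X i) (w i) (c i)` of `X i`. Removing a leaf `j` replaces the weight
of `a = par j` by `w a x * 𝔼 y ∈ X j, G x y * w j y`. Testing `DISC_≥` against the indicators of the
bad `x ∈ X a` and of the good `y ∈ X j` shows that this average is at least
`c j * max (q - δ p) 0` outside a fraction `2ε/δ` of `X a`: the factor `p` cancels, which is what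
makes the final error relative to `p(H)`. After all `m - 1` leaves are gone, the density is at least
`∏ₑ max (qₑ - δ pₑ) 0 * (1 - m * 2ε/δ) ≥ q(H) - (δ m + m * 2ε/δ) p(H)`, and `δ = θ/(2m)`,
`ε = δ²/(4m)` make the error at most `θ p(H)`.
-/

open Finset Function
open scoped BigOperators

lemma Finset.prod_sub_prod_le_mul_card {ι : Type*} [DecidableEq ι] {s : Finset ι} {a b c : ι → ℝ}
    {δ : ℝ} (hδ : 0 ≤ δ) (h : ∀ i ∈ s, 0 ≤ a i ∧ a i ≤ b i ∧ b i ≤ c i)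
    (hd : ∀ i ∈ s, b i - a i ≤ δ * c i) :
    ∏ i ∈ s, b i - ∏ i ∈ s, a i ≤ δ * #s * ∏ i ∈ s, c i := by
  induction s using Finset.induction_on with
  | empty => simp
  | insert j s hj ih =>
    have h' : ∀ i ∈ s, 0 ≤ a i ∧ a i ≤ b i ∧ b i ≤ c i := fun i hi => h i (mem_insert_of_mem hi)
    have ih := ih h' fun i hi => hd i (mem_insert_of_mem hi)
    obtain ⟨ha, hab, hbc⟩ := h j (mem_insert_self j s)
    have hdj := hd j (mem_insert_self j s)
    have hPa : 0 ≤ ∏ i ∈ s, a i := prod_nonneg fun i hi => (h' i hi).1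
    have hPac : ∏ i ∈ s, a i ≤ ∏ i ∈ s, c i :=
      prod_le_prod (fun i hi => (h' i hi).1) fun i hi => (h' i hi).2.1.trans (h' i hi).2.2
    have hPc : 0 ≤ δ * #s * ∏ i ∈ s, c i := mul_nonneg (by positivity)
      (prod_nonneg fun i hi => (h' i hi).1.trans ((h' i hi).2.1.trans (h' i hi).2.2))
    rw [prod_insert hj, prod_insert hj, prod_insert hj, card_insert_of_notMem hj]
    push_cast
    nlinarith [mul_le_mul_of_nonneg_left ih (ha.trans hab), mul_le_mul_of_nonneg_right hbc hPc,
      mul_le_mul hdj hPac hPa (by linarith)]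

lemma Finset.one_sub_sum_le_prod_one_sub {ι : Type*} [DecidableEq ι] {s : Finset ι} {β : ι → ℝ}
    (h0 : ∀ i ∈ s, 0 ≤ β i) (h1 : ∀ i ∈ s, β i ≤ 1) : 1 - ∑ i ∈ s, β i ≤ ∏ i ∈ s, (1 - β i) := by
  induction s using Finset.induction_on with
  | empty => simp
  | insert a s ha ih =>
    rw [sum_insert ha, prod_insert ha]
    have hs := ih (fun i hi => h0 i (mem_insert_of_mem hi))
      (fun i hi => h1 i (mem_insert_of_mem hi))
    have hβs : 0 ≤ ∑ i ∈ s, β i := sum_nonneg fun i hi => h0 i (mem_insert_of_mem hi)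
    nlinarith [h0 a (mem_insert_self a s), h1 a (mem_insert_self a s)]

lemma Finset.prod_update_update_one {ι M : Type*} [Fintype ι] [DecidableEq ι] [CommMonoid M]
    {a j : ι} (h : a ≠ j) (g : ι → M) (u : M) :
    ∏ i, update (update g a (g a * u)) j 1 i = (∏ i ∈ univ \ {j}, g i) * u := by
  have ha : a ∈ univ \ {j} := by simpa using h
  rw [prod_update_of_mem (mem_univ j), prod_update_of_mem ha,
    prod_eq_mul_prod_sdiff_singleton_of_mem ha g, one_mul, mul_right_comm]

lemma Finset.exists_leaf_of_depth_lt {ι : Type*} [DecidableEq ι] {par : ι → ι} {dd : ι → ℕ}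
    {S : Finset ι} (hS : S.Nonempty) (hdd : ∀ j ∈ S, dd (par j) < dd j) :
    ∃ j ∈ S, par j ≠ j ∧ ∀ k ∈ S.erase j, par k ≠ j := by
  obtain ⟨j, hj, hjmax⟩ := S.exists_max_image dd hS
  refine ⟨j, hj, fun h => (hdd j hj).ne (congrArg dd h), fun k hk h => ?_⟩
  have hk' := hdd k (mem_of_mem_erase hk)
  rw [h] at hk'
  exact (hjmax k (mem_of_mem_erase hk)).not_gt hk'

section Expectation
variable {ι V : Type*} [Fintype ι] [DecidableEq ι] (X : ι → Finset V)

lemma expect_piFinset_prod (f : ι → V → ℝ) :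
    𝔼 z ∈ Fintype.piFinset X, ∏ i, f i (z i) = ∏ i, 𝔼 y ∈ X i, f i y := by
  simp only [expect_eq_sum_div_card, Fintype.card_piFinset, ← prod_univ_sum, Nat.cast_prod,
    prod_div_distrib]

lemma expect_piFinset_update {j : ι} (hj : (X j).Nonempty) (f : (ι → V) → ℝ) :
    𝔼 z ∈ Fintype.piFinset X, 𝔼 y ∈ X j, f (update z j y) = 𝔼 z ∈ Fintype.piFinset X, f z := by
  let σ : (ι → V) × V → (ι → V) × V := fun p => (update p.1 j p.2, p.1 j)
  have hσ : Involutive σ := fun p => by simp [σ]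
  have hmem : ∀ p ∈ Fintype.piFinset X ×ˢ X j, σ p ∈ Fintype.piFinset X ×ˢ X j := by
    rintro ⟨z, y⟩ hp
    simp only [σ, mem_product, Fintype.mem_piFinset] at hp ⊢
    exact ⟨fun i => by rcases eq_or_ne i j with rfl | hi <;> simp [*], hp.1 j⟩
  rw [← expect_product', expect_nbij' σ σ hmem hmem (fun p _ => hσ p) (fun p _ => hσ p)
    (g := fun p => f p.1) (fun _ _ => rfl), expect_product' (f := fun z _ => f z)]
  simp only [expect_const hj]

end Expectation

section LowFraction
variable {V : Type*}

noncomputable def fracBelow (A : Finset V) (f : V → ℝ) (c : ℝ) : ℝ := #{x ∈ A | f x < c} / #A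

variable {A : Finset V} {f g : V → ℝ} {c d : ℝ}

lemma fracBelow_nonneg : 0 ≤ fracBelow A f c := by unfold fracBelow; positivity

lemma fracBelow_le_one : fracBelow A f c ≤ 1 :=
  div_le_one_of_le₀ (by exact_mod_cast card_filter_le _ _) (by positivity)

@[simp] lemma fracBelow_one : fracBelow A 1 1 = 0 := by simp [fracBelow]

lemma fracBelow_mul_le [DecidableEq V] (hc : 0 ≤ c) (hg : ∀ x, 0 ≤ g x) :
    fracBelow A (f * g) (c * d) ≤ fracBelow A f c + fracBelow A g d := by
  unfold fracBelow
  rw [← add_div]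
  gcongr
  norm_cast
  refine (card_le_card fun x hx => ?_).trans (card_union_le _ _)
  simp only [mem_filter, mem_union, Pi.mul_apply] at hx ⊢
  by_contra! h
  have := (mul_le_mul_of_nonneg_left (h.2 hx.1) hc).trans
    (mul_le_mul_of_nonneg_right (h.1 hx.1) (hg x))
  linarith [hx.2]

lemma mul_one_sub_fracBelow_le_expect (hA : A.Nonempty) (hf : ∀ x, 0 ≤ f x) :
    c * (1 - fracBelow A f c) ≤ 𝔼 x ∈ A, f x := by
  have hA' : (0 : ℝ) < #A := by exact_mod_cast hA.card_pos
  have hsplit := card_filter_add_card_filter_not (s := A) (fun x => f x < c)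
  rw [fracBelow, one_sub_div hA'.ne', expect_eq_sum_div_card, mul_div_assoc',
    div_le_div_iff_of_pos_right hA', ← hsplit]
  push_cast
  calc c * (#{x ∈ A | f x < c} + #{x ∈ A | ¬f x < c} - #{x ∈ A | f x < c} : ℝ)
      = ∑ x ∈ A with ¬f x < c, c := by rw [sum_const, nsmul_eq_mul]; ring
    _ ≤ ∑ x ∈ A with ¬f x < c, f x := sum_le_sum fun x hx => not_lt.mp (mem_filter.mp hx).2
    _ ≤ ∑ x ∈ A, f x := sum_le_sum_of_subset_of_nonneg (filter_subset _ _) fun x _ _ => hf x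

end LowFraction

section Discrepancy
variable {V : Type*} [DecidableEq V] {A B : Finset V} {K : V → V → ℝ} {q p ε δ : ℝ}

lemma DISCge.neg_mul_card_le_sum (h : DISCge A B K q p ε) (hA : A.Nonempty) (hB : B.Nonempty)
    {L M : Finset V} (hL : L ⊆ A) (hM : M ⊆ B) :
    -(ε * p) * (#A * #B) ≤ ∑ x ∈ L, ∑ y ∈ M, (K x y - q) := by
  have hAB : (0 : ℝ) < #A * #B := by
    have := hA.card_pos; have := hB.card_pos; positivity
  have := h (fun x => if x ∈ L then 1 else 0) (fun y => if y ∈ M then 1 else 0)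
    (fun x => by split_ifs <;> norm_num) (fun y => by split_ifs <;> norm_num)
  rw [le_div_iff₀ hAB] at this
  simpa [mul_ite, ← sum_filter, filter_mem_eq_inter, inter_eq_right.mpr hL,
    inter_eq_right.mpr hM] using this

lemma DISCge.card_filter_sum_lt_le (h : DISCge A B K q p ε) (hA : A.Nonempty) (hB : B.Nonempty)
    (hK : ∀ x y, 0 ≤ K x y) (hq : 0 ≤ q) (hqp : q ≤ p) (hε : 0 ≤ ε) (hδ : 0 < δ)
    {M : Finset V} (hM : M ⊆ B) (hMc : (#(B \ M) : ℝ) ≤ δ / 2 * #B) :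
    (#{x ∈ A | ∑ y ∈ M, K x y < max (q - δ * p) 0 * #B} : ℝ) ≤ 2 * ε / δ * #A := by
  set L := {x ∈ A | ∑ y ∈ M, K x y < max (q - δ * p) 0 * #B}
  rcases le_or_gt (q - δ * p) 0 with hqd | hqd
  · have : L = ∅ := filter_false_of_mem fun x _ => by
      rw [max_eq_right hqd, zero_mul, not_lt]; exact sum_nonneg fun y _ => hK x y
    rw [this, card_empty, Nat.cast_zero]
    positivity
  have hp : 0 < p := by nlinarith
  have hB' : (0 : ℝ) < #B := by exact_mod_cast hB.card_pos
  have hMcard : (#M : ℝ) = #B - #(B \ M) := by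
    rw [card_sdiff_of_subset hM, Nat.cast_sub (card_le_card hM)]; ring
  -- Every `x ∈ L` pushes the discrepancy sum down by `δp|B|/2`; the sum is at least `-εp|A||B|`,
  -- so `p` cancels.
  have hrow : ∀ x ∈ L, ∑ y ∈ M, (K x y - q) ≤ -(δ * p / 2 * #B) := by
    intro x hx
    have hlt := (mem_filter.mp hx).2
    rw [max_eq_left hqd.le] at hlt
    rw [sum_sub_distrib, sum_const, nsmul_eq_mul, hMcard]
    nlinarith
  have := (h.neg_mul_card_le_sum hA hB (filter_subset _ A) hM).trans
    ((sum_le_sum hrow).trans_eq (by rw [sum_const, nsmul_eq_mul]))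
  rw [div_mul_eq_mul_div, le_div_iff₀ hδ]
  nlinarith [mul_pos hp hB']

lemma DISCge.fracBelow_expect_le (h : DISCge A B K q p ε) (hA : A.Nonempty) (hB : B.Nonempty)
    (hK : ∀ x y, 0 ≤ K x y) (hq : 0 ≤ q) (hqp : q ≤ p) (hε : 0 ≤ ε) (hδ : 0 < δ)
    {w : V → ℝ} {c : ℝ} (hw : ∀ y, 0 ≤ w y) (hc : 0 ≤ c) (hwc : fracBelow B w c ≤ δ / 2) :
    fracBelow A (fun x => 𝔼 y ∈ B, K x y * w y) (c * max (q - δ * p) 0) ≤ 2 * ε / δ := by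
  have hA' : (0 : ℝ) < #A := by exact_mod_cast hA.card_pos
  have hB' : (0 : ℝ) < #B := by exact_mod_cast hB.card_pos
  set M := {y ∈ B | ¬w y < c}
  have hMc : (#(B \ M) : ℝ) ≤ δ / 2 * #B := by
    rw [← filter_not]; simp only [not_not]; rw [← div_le_iff₀ hB']; exact hwc
  rw [fracBelow, div_le_iff₀ hA']
  refine le_trans (Nat.cast_le.mpr (card_le_card fun x hx => ?_))
    (h.card_filter_sum_lt_le hA hB hK hq hqp hε hδ (filter_subset _ B) hMc)
  simp only [mem_filter] at hx ⊢
  refine ⟨hx.1, lt_of_mul_lt_mul_left ?_ hc⟩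
  calc c * ∑ y ∈ M, K x y ≤ ∑ y ∈ M, K x y * w y := by
        rw [mul_sum]
        exact sum_le_sum fun y hy => by
          nlinarith [hK x y, not_lt.mp (mem_filter.mp hy).2]
    _ ≤ ∑ y ∈ B, K x y * w y :=
        sum_le_sum_of_subset_of_nonneg (filter_subset _ B) fun y _ _ => mul_nonneg (hK x y) (hw y)
    _ < c * (max (q - δ * p) 0 * #B) := by
        rw [← mul_assoc, ← div_lt_iff₀ hB', ← expect_eq_sum_div_card]; exact hx.2

end Discrepancy

noncomputable def weightedDensity {ι V : Type*} [Fintype ι] [DecidableEq ι] (X : ι → Finset V)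
    (K : V → V → ℝ) (par : ι → ι) (S : Finset ι) (w : ι → V → ℝ) : ℝ :=
  𝔼 z ∈ Fintype.piFinset X, (∏ j ∈ S, K (z (par j)) (z j)) * ∏ i, w i (z i)

noncomputable def absorbLeaf {ι V : Type*} [DecidableEq ι] (X : ι → Finset V) (K : V → V → ℝ)
    (par : ι → ι) (w : ι → V → ℝ) (j : ι) : ι → V → ℝ :=
  update (update w (par j) fun x => w (par j) x * 𝔼 y ∈ X j, K x y * w j y) j 1

section Peeling
variable {ι V : Type*} [DecidableEq ι] {X : ι → Finset V} {K : V → V → ℝ} {par : ι → ι}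

lemma absorbLeaf_nonneg (hK : ∀ x y, 0 ≤ K x y) {w : ι → V → ℝ} (hw : ∀ i x, 0 ≤ w i x)
    (j : ι) (i : ι) (x : V) : 0 ≤ absorbLeaf X K par w j i x := by
  simp only [absorbLeaf, update_apply]
  split_ifs
  · exact zero_le_one
  · exact mul_nonneg (hw _ x) (expect_nonneg fun y _ => mul_nonneg (hK x y) (hw j y))
  · exact hw i x

variable [Fintype ι]

lemma sum_fracBelow_absorbLeaf_le [DecidableEq V] (hK : ∀ x y, 0 ≤ K x y) {w : ι → V → ℝ}
    (hw : ∀ i x, 0 ≤ w i x) {c : ι → ℝ} (hc : ∀ i, 0 ≤ c i) {j : ι} (hpar : par j ≠ j) {d b : ℝ}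
    (hd : fracBelow (X (par j)) (fun x => 𝔼 y ∈ X j, K x y * w j y) (c j * d) ≤ b) :
    ∑ i, fracBelow (X i) (absorbLeaf X K par w j i)
        (update (update c (par j) (c (par j) * (c j * d))) j 1 i)
      ≤ ∑ i, fracBelow (X i) (w i) (c i) + b := by
  calc _ ≤ ∑ i, (fracBelow (X i) (w i) (c i) + if i = par j then b else 0) :=
        sum_le_sum fun i _ => ?_
    _ = ∑ i, fracBelow (X i) (w i) (c i) + b := by simp [sum_add_distrib]
  rcases eq_or_ne i j with rfl | hij
  · simp only [absorbLeaf, update_self, if_neg hpar.symm, add_zero]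
    rw [fracBelow_one]
    exact fracBelow_nonneg
  rcases eq_or_ne i (par j) with rfl | hia
  · simp only [absorbLeaf, update_of_ne hij, update_self, if_true]
    exact (fracBelow_mul_le (f := w (par j)) (hc _) fun x =>
      expect_nonneg fun y _ => mul_nonneg (hK x y) (hw j y)).trans (add_le_add le_rfl hd)
  · simp [absorbLeaf, update_of_ne hij, hia]

lemma weightedDensity_erase_leaf (hX : ∀ i, (X i).Nonempty) {S : Finset ι} {j : ι}
    (hj : j ∈ S) (hpar : par j ≠ j) (hleaf : ∀ k ∈ S.erase j, par k ≠ j) (w : ι → V → ℝ) :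
    weightedDensity X K par (S.erase j) (absorbLeaf X K par w j) = weightedDensity X K par S w := by
  unfold weightedDensity
  conv_rhs => rw [← expect_piFinset_update X (hX j)]
  refine expect_congr rfl fun z _ => ?_
  have hedges : ∀ y, ∏ k ∈ S, K (update z j y (par k)) (update z j y k)
      = K (z (par j)) y * ∏ k ∈ S.erase j, K (z (par k)) (z k) := fun y => by
    rw [← mul_prod_erase S _ hj, update_self, update_of_ne hpar]
    congr 1
    exact prod_congr rfl fun k hk => by
      rw [update_of_ne (hleaf k hk), update_of_ne (ne_of_mem_erase hk)]
  have hweights : ∀ y, ∏ i, w i (update z j y i) = w j y * ∏ i ∈ univ \ {j}, w i (z i) :=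
    fun y => by
      rw [prod_eq_mul_prod_sdiff_singleton_of_mem (mem_univ j), update_self]
      congr 1
      exact prod_congr rfl fun i hi => by
        rw [update_of_ne (by simpa using hi)]
  have habsorb : ∏ i, absorbLeaf X K par w j i (z i)
      = (∏ i ∈ univ \ {j}, w i (z i)) * 𝔼 y ∈ X j, K (z (par j)) y * w j y := by
    rw [← prod_update_update_one hpar]
    congr 1; funext i
    simp only [absorbLeaf, update_apply]
    split_ifs with h₁ h₂
    · rfl
    · subst h₂; rfl
    · rfl
  simp only [hedges, hweights, habsorb, mul_expect]
  exact expect_congr rfl fun y _ => by ring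

lemma prod_mul_one_sub_le_weightedDensity_empty (hX : ∀ i, (X i).Nonempty) {w : ι → V → ℝ}
    (hw : ∀ i x, 0 ≤ w i x) {c : ι → ℝ} (hc : ∀ i, 0 ≤ c i) :
    (∏ i, c i) * (1 - ∑ i, fracBelow (X i) (w i) (c i)) ≤ weightedDensity X K par ∅ w := by
  rw [weightedDensity]
  simp only [prod_empty, one_mul, expect_piFinset_prod]
  calc (∏ i, c i) * (1 - ∑ i, fracBelow (X i) (w i) (c i))
      ≤ (∏ i, c i) * ∏ i, (1 - fracBelow (X i) (w i) (c i)) :=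
        mul_le_mul_of_nonneg_left (one_sub_sum_le_prod_one_sub (fun _ _ => fracBelow_nonneg)
          (fun _ _ => fracBelow_le_one)) (prod_nonneg fun i _ => hc i)
    _ = ∏ i, c i * (1 - fracBelow (X i) (w i) (c i)) := prod_mul_distrib.symm
    _ ≤ ∏ i, 𝔼 y ∈ X i, w i y :=
        prod_le_prod (fun i _ => mul_nonneg (hc i) (sub_nonneg.mpr fracBelow_le_one))
          (fun i _ => mul_one_sub_fracBelow_le_expect (hX i) (hw i))

theorem le_weightedDensity [DecidableEq V] (hX : ∀ i, (X i).Nonempty) (hK : ∀ x y, 0 ≤ K x y)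
    {q p : ι → ℝ} {ε δ : ℝ} (hε : 0 ≤ ε) (hδ : 0 < δ) (dd : ι → ℕ) (S : Finset ι)
    (hdd : ∀ j ∈ S, dd (par j) < dd j) (hqp : ∀ j ∈ S, 0 ≤ q j ∧ q j ≤ p j)
    (hdisc : ∀ j ∈ S, DISCge (X (par j)) (X j) K (q j) (p j) ε)
    (w : ι → V → ℝ) (hw : ∀ i x, 0 ≤ w i x) (c : ι → ℝ) (hc : ∀ i, 0 ≤ c i) {t : ℝ}
    (ht : ∑ i, fracBelow (X i) (w i) (c i) + #S * (2 * ε / δ) ≤ t) (htδ : t ≤ δ / 2) :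
    (∏ j ∈ S, max (q j - δ * p j) 0) * (∏ i, c i) * (1 - t) ≤ weightedDensity X K par S w := by
  induction S using Finset.strongInduction generalizing w c with
  | H S ih =>
  rcases S.eq_empty_or_nonempty with rfl | hS
  · refine le_trans ?_ (prod_mul_one_sub_le_weightedDensity_empty hX hw hc)
    rw [prod_empty, one_mul]
    simp only [card_empty, Nat.cast_zero, zero_mul, add_zero] at ht
    exact mul_le_mul_of_nonneg_left (by linarith) (prod_nonneg fun i _ => hc i)
  obtain ⟨j, hj, hpar, hleaf⟩ := exists_leaf_of_depth_lt hS hdd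
  set d := max (q j - δ * p j) 0
  have hcj : fracBelow (X j) (w j) (c j) ≤ δ / 2 := by
    have := single_le_sum (fun i _ => fracBelow_nonneg (A := X i) (f := w i) (c := c i))
      (mem_univ j)
    have : (0 : ℝ) ≤ #S * (2 * ε / δ) := by positivity
    linarith
  have hsum := sum_fracBelow_absorbLeaf_le hK hw hc hpar <|
    (hdisc j hj).fracBelow_expect_le (hX _) (hX j) hK (hqp j hj).1 (hqp j hj).2 hε hδ (hw j)
      (hc j) hcj
  have hcard : (#S : ℝ) = #(S.erase j) + 1 := by exact_mod_cast (card_erase_add_one hj).symm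
  -- The share `2ε/δ` of `t` reserved for `j` pays for the new exceptional set at `par j`.
  have key := ih (S.erase j) (erase_ssubset hj) (fun k hk => hdd k (mem_of_mem_erase hk))
    (fun k hk => hqp k (mem_of_mem_erase hk)) (fun k hk => hdisc k (mem_of_mem_erase hk))
    (absorbLeaf X K par w j) (absorbLeaf_nonneg hK hw j)
    (update (update c (par j) (c (par j) * (c j * d))) j 1) (fun i => by
      simp only [update_apply]
      split_ifs
      exacts [zero_le_one, mul_nonneg (hc _) (mul_nonneg (hc j) (le_max_right _ _)), hc i])
    (by rw [hcard] at ht; linarith)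
  rw [weightedDensity_erase_leaf hX hj hpar hleaf, prod_update_update_one hpar] at key
  refine le_trans (le_of_eq ?_) key
  rw [← mul_prod_erase S _ hj, prod_eq_mul_prod_sdiff_singleton_of_mem (mem_univ j)]
  ring

theorem prod_sub_mul_prod_le_weightedDensity [DecidableEq V] (hX : ∀ i, (X i).Nonempty)
    (hK : ∀ x y, 0 ≤ K x y) {q p : ι → ℝ} {ε δ θ : ℝ} (hε : 0 ≤ ε) (hδ : 0 < δ) (dd : ι → ℕ)
    (S : Finset ι) (hdd : ∀ j ∈ S, dd (par j) < dd j) (hqp : ∀ j ∈ S, 0 ≤ q j ∧ q j ≤ p j)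
    (hdisc : ∀ j ∈ S, DISCge (X (par j)) (X j) K (q j) (p j) ε)
    (hSδ : #S * (2 * ε / δ) ≤ δ / 2) (hθ : δ * #S + #S * (2 * ε / δ) ≤ θ) :
    ∏ j ∈ S, q j - θ * ∏ j ∈ S, p j ≤ weightedDensity X K par S 1 := by
  set d := fun j => max (q j - δ * p j) 0
  have hd : ∀ j ∈ S, 0 ≤ d j ∧ d j ≤ q j ∧ q j ≤ p j := fun j hj => by
    obtain ⟨hq, hqp⟩ := hqp j hj
    exact ⟨le_max_right _ _, max_le (by nlinarith) hq, hqp⟩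
  have hdiff := prod_sub_prod_le_mul_card hδ.le hd fun j _ => by
    linarith [le_max_left (q j - δ * p j) 0]
  have hdp : ∏ j ∈ S, d j ≤ ∏ j ∈ S, p j :=
    prod_le_prod (fun j hj => (hd j hj).1) fun j hj => (hd j hj).2.1.trans (hd j hj).2.2
  have hp : 0 ≤ ∏ j ∈ S, p j :=
    prod_nonneg fun j hj => (hd j hj).1.trans ((hd j hj).2.1.trans (hd j hj).2.2)
  have hmain := le_weightedDensity hX hK hε hδ dd S hdd hqp hdisc 1 (fun _ _ => zero_le_one) 1
    (fun _ => zero_le_one) (by simp) hSδ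
  simp only [Pi.one_apply, prod_const_one, mul_one] at hmain
  have ht : 0 ≤ #S * (2 * ε / δ) := by positivity
  nlinarith [mul_nonneg (sub_nonneg.mpr hθ) hp, mul_nonneg ht (sub_nonneg.mpr hdp)]

end Peeling

namespace SimpleGraph
variable {W : Type*} {G : SimpleGraph W}

lemma Connected.exists_adj_dist_add_one (hG : G.Connected) {r j : W} (hj : j ≠ r) :
    ∃ i, G.Adj i j ∧ G.dist r i + 1 = G.dist r j := by
  obtain ⟨p, -, hp⟩ := hG.exists_path_of_dist r j
  have hnil : ¬p.Nil := fun h => hj h.eq.symm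
  have hadj := Walk.adj_penultimate hnil
  refine ⟨p.penultimate, hadj, ?_⟩
  have h₁ := dist_le p.dropLast
  rw [Walk.length_dropLast] at h₁
  have h₂ := hG.pos_dist_of_ne hj.symm
  rcases hadj.diff_dist_adj (u := r) with h | h | h <;> omega

lemma IsTree.eq_of_adj_of_dist_add_one (hG : G.IsTree) {r a b j : W} (ha : G.Adj a j)
    (hda : G.dist r a + 1 = G.dist r j) (hb : G.Adj b j) (hdb : G.dist r b + 1 = G.dist r j) :
    a = b := by
  classical
  obtain ⟨p, hp, -⟩ := hG.connected.exists_path_of_dist r j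
  have key : ∀ x, G.Adj x j → G.dist r x + 1 = G.dist r j → x = p.penultimate := by
    intro x hx hdx
    obtain ⟨q, hq, hqlen⟩ := hG.connected.exists_path_of_dist r x
    have hjq : j ∉ q.support := fun hj => by
      have := (dist_le (q.takeUntil j hj)).trans (q.length_takeUntil_le_length hj)
      omega
    exact hG.isAcyclic.eq_penultimate_of_adj_end hp hx.symm
      (hG.isAcyclic.mem_support_of_ne_mem_support_of_adj_of_isPath hp hq hx.symm hjq)
  exact (key a ha hda).trans (key b hb hdb).symm

lemma Connected.exists_parent (hG : G.Connected) (r : W) :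
    ∃ par : W → W, ∀ j, j ≠ r → G.Adj (par j) j ∧ G.dist r (par j) + 1 = G.dist r j := by
  choose! par hpar using fun j (hj : j ≠ r) => hG.exists_adj_dist_add_one hj
  exact ⟨par, hpar⟩

lemma IsTree.parent_eq_of_adj (hG : G.IsTree) {r : W} {par : W → W}
    (hpar : ∀ j, j ≠ r → G.Adj (par j) j ∧ G.dist r (par j) + 1 = G.dist r j) {a b : W}
    (h : G.Adj a b) (hd : G.dist r a < G.dist r b) : b ≠ r ∧ par b = a := by
  have hb : b ≠ r := by rintro rfl; simp at hd
  refine ⟨hb, hG.eq_of_adj_of_dist_add_one (hpar b hb).1 (hpar b hb).2 h ?_⟩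
  rcases hG.dist_eq_dist_add_one_of_adj r h with h' | h' <;> omega

lemma IsTree.prod_adj_eq_prod_parent {M : Type*} [CommMonoid M] [Fintype W] [LinearOrder W]
    [DecidableRel G.Adj] (hG : G.IsTree) {r : W} {par : W → W}
    (hpar : ∀ j, j ≠ r → G.Adj (par j) j ∧ G.dist r (par j) + 1 = G.dist r j)
    (A : W → W → M) (hA : ∀ i j, A i j = A j i) :
    ∏ i, ∏ j, (if i < j ∧ G.Adj i j then A i j else 1) = ∏ j ∈ univ.erase r, A (par j) j := by
  rw [← prod_product' (f := fun i j => if i < j ∧ G.Adj i j then A i j else 1), ← prod_filter]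
  have hlt : ∀ j, j ≠ r → G.dist r (par j) < G.dist r j := fun j hj => by
    have := (hpar j hj).2; omega
  refine (prod_nbij' (fun j => (min (par j) j, max (par j) j))
    (fun e => if G.dist r e.1 < G.dist r e.2 then e.2 else e.1) ?_ ?_ ?_ ?_ ?_).symm
  · intro j hj
    replace hj := ne_of_mem_erase hj
    have hne : par j ≠ j := fun h => (hlt j hj).ne (congrArg _ h)
    simp only [mem_filter, mem_product, mem_univ, true_and]
    rcases lt_or_gt_of_ne hne with h | h
    · simp [h.le, h, (hpar j hj).1]
    · simp [h.le, h, (hpar j hj).1.symm]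
  · rintro ⟨a, b⟩ he
    simp only [mem_filter, mem_product, mem_univ, true_and] at he
    simp only [mem_erase, mem_univ, and_true]
    rcases lt_or_gt_of_ne (hG.dist_ne_of_adj r he.2) with h | h
    · simpa [h] using (hG.parent_eq_of_adj hpar he.2 h).1
    · simpa [h.not_gt] using (hG.parent_eq_of_adj hpar he.2.symm h).1
  · intro j hj
    replace hj := ne_of_mem_erase hj
    rcases le_total (par j) j with h | h
    · simp [h, hlt j hj]
    · simp [h, (hlt j hj).not_gt]
  · rintro ⟨a, b⟩ he
    simp only [mem_filter, mem_product, mem_univ, true_and] at he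
    rcases lt_or_gt_of_ne (hG.dist_ne_of_adj r he.2) with h | h
    · simp [h, (hG.parent_eq_of_adj hpar he.2 h).2, he.1.le]
    · simp [h.not_gt, (hG.parent_eq_of_adj hpar he.2.symm h).2, he.1.le]
  · intro j _
    rcases le_total (par j) j with h | h
    · simp [h]
    · simp [h, hA]

end SimpleGraph

namespace SimpleGraph.IsTree
variable {m : ℕ} {H : SimpleGraph (Fin m)} {r : Fin m} {par : Fin m → Fin m}

lemma qprod_eq_prod_parent (hH : H.IsTree)
    (hpar : ∀ j, j ≠ r → H.Adj (par j) j ∧ H.dist r (par j) + 1 = H.dist r j)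
    {q : Fin m → Fin m → ℝ} (hq : ∀ i j, q i j = q j i) :
    qprod q H = ∏ j ∈ univ.erase r, q (par j) j := by
  classical
  exact hH.prod_adj_eq_prod_parent hpar q hq

lemma den_eq_weightedDensity {V : Type*} [Fintype V] (hH : H.IsTree)
    (hpar : ∀ j, j ≠ r → H.Adj (par j) j ∧ H.dist r (par j) + 1 = H.dist r j)
    (X : Fin m → Finset V) {G : V → V → ℝ} (hG : ∀ x y, G x y = G y x) :
    den G H X = weightedDensity X G par (univ.erase r) 1 := by
  classical
  rw [den, weightedDensity, expect_eq_sum_div_card, Fintype.card_piFinset, Nat.cast_prod]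
  congr 1
  refine sum_congr rfl fun z _ => ?_
  simp [hH.prod_adj_eq_prod_parent hpar _ fun i j => hG (z i) (z j)]

end SimpleGraph.IsTree

theorem stmt_17 {m : ℕ} (H : SimpleGraph (Fin m)) (hH : H.IsTree) :
    ∃ C r : ℝ, 0 < C ∧ 0 < r ∧
      ∀ θ : ℝ, 0 < θ → θ ≤ 1 →
        ∃ ε : ℝ, 0 < ε ∧ C * θ ^ r ≤ ε ∧
          ∀ (V : Type) (_ : Fintype V) (X : Fin m → Finset V),
            (∀ i, (X i).Nonempty) →
            ∀ G : V → V → ℝ, (∀ x y, G x y = G y x) → (∀ x y, 0 ≤ G x y ∧ G x y ≤ 1) →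
            ∀ q p : Fin m → Fin m → ℝ,
              (∀ i j, q i j = q j i) → (∀ i j, p i j = p j i) →
              (∀ i j, H.Adj i j → 0 ≤ q i j ∧ q i j ≤ p i j ∧ p i j ≤ 1) →
              (∀ i j, H.Adj i j → DISCge (X i) (X j) G (q i j) (p i j) ε) →
              qprod q H - θ * qprod p H ≤ den G H X := by
  classical
  obtain ⟨r⟩ := hH.connected.nonempty
  obtain ⟨par, hpar⟩ := hH.connected.exists_parent r
  have hm : (1 : ℝ) ≤ m := by exact_mod_cast r.pos
  refine ⟨1 / (16 * m ^ 3), 2, by positivity, two_pos, fun θ hθ _ => ?_⟩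
  set δ := θ / (2 * m)
  have hδ : 0 < δ := by positivity
  refine ⟨δ ^ 2 / (4 * m), by positivity, le_of_eq ?_, ?_⟩
  · rw [Real.rpow_two]; simp only [δ]; field_simp; ring
  intro V _ X hX G hGsymm hG q p hqsymm hpsymm hbounds hdisc
  have hadj (j) (hj : j ∈ univ.erase r) : H.Adj (par j) j := (hpar j (ne_of_mem_erase hj)).1
  have hn : (#(univ.erase r) : ℝ) ≤ m := by exact_mod_cast card_erase_le.trans (by simp)
  have hS : (#(univ.erase r) : ℝ) * (2 * (δ ^ 2 / (4 * m)) / δ) ≤ δ / 2 := by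
    rw [show 2 * (δ ^ 2 / (4 * m)) / δ = δ / 2 / m by field_simp; ring, mul_div_assoc',
      div_le_iff₀ (by positivity)]
    nlinarith
  rw [hH.qprod_eq_prod_parent hpar hqsymm, hH.qprod_eq_prod_parent hpar hpsymm,
    hH.den_eq_weightedDensity hpar X hGsymm]
  refine prod_sub_mul_prod_le_weightedDensity hX (fun x y => (hG x y).1) (by positivity) hδ
    (H.dist r) _ (fun j hj => by have := (hpar j (ne_of_mem_erase hj)).2; omega)
    (fun j hj => ⟨(hbounds _ _ (hadj j hj)).1, (hbounds _ _ (hadj j hj)).2.1⟩)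
    (fun j hj => hdisc _ _ (hadj j hj)) hS ?_
  have : δ * m = θ / 2 := by simp only [δ]; field_simp
  have : δ ≤ θ / 2 := div_le_div_of_nonneg_left hθ.le two_pos (by linarith)
  nlinarith
end
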